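/- arXiv:1905.01495 — 6 statements merged into one kernel-verified Lean document; each statement's English description precedes it below -/
import Mathlib

section
/- For any real numbers x_1 ≤ x_2 ≤ ... ≤ x_k with k ≥ 2, one has (x_k - x_1)^2 ≤ (2/k) · Σ_{i<j} (x_i - x_j)^2, i.e. k·(x_k - x_1)^2 ≤ 2·Σ_{i<j}(x_i - x_j)^2. -/
theorem stmt_1 (k : ℕ) (hk : 2 ≤ k) (x : Fin k → ℝ) (hx : Monotone x) :
    (k : ℝ) * (x ⟨k - 1, by omega⟩ - x ⟨0, by omega⟩) ^ 2 ≤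
      2 * ∑ p ∈ Finset.univ.filter (fun p : Fin k × Fin k => p.1 < p.2),
            (x p.1 - x p.2) ^ 2 := by
  classical
  set z : Fin k := ⟨0, by omega⟩ with hz
  set l : Fin k := ⟨k - 1, by omega⟩ with hl
  have hzl : z < l := by simp only [Fin.lt_def, hz, hl]; omega
  have hznel : z ≠ l := ne_of_lt hzl
  set f : Fin k × Fin k → ℝ := fun p => (x p.1 - x p.2) ^ 2 with hf
  set S := Finset.univ.filter (fun p : Fin k × Fin k => p.1 < p.2) with hS
  set M := Finset.univ.filter (fun j : Fin k => z < j ∧ j < l) with hM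
  -- images
  set E1 := (Finset.univ.filter (fun j : Fin k => z < j)).image (fun j => (z, j)) with hE1
  set E2 := M.image (fun i => (i, l)) with hE2
  have hsub : E1 ∪ E2 ⊆ S := by
    intro p hp
    simp only [hE1, hE2, hS, hM, Finset.mem_union, Finset.mem_image, Finset.mem_filter,
      Finset.mem_univ, true_and] at hp ⊢
    rcases hp with ⟨j, hj, rfl⟩ | ⟨i, hi, rfl⟩
    · exact hj
    · exact hi.2
  have hdisj : Disjoint E1 E2 := by
    rw [Finset.disjoint_left]
    intro p hp1 hp2
    simp only [hE1, hE2, hM, Finset.mem_image, Finset.mem_filter, Finset.mem_univ,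
      true_and] at hp1 hp2
    rcases hp1 with ⟨j, hj, rfl⟩
    rcases hp2 with ⟨i, hi, hie⟩
    have : i = z := congrArg Prod.fst hie
    exact absurd (this ▸ hi.1) (lt_irrefl z)
  have hstep1 : ∑ p ∈ E1 ∪ E2, f p ≤ ∑ p ∈ S, f p := by
    apply Finset.sum_le_sum_of_subset_of_nonneg hsub
    intro p _ _
    positivity
  have hsum1 : ∑ p ∈ E1, f p = ∑ j ∈ Finset.univ.filter (fun j : Fin k => z < j),
      (x z - x j) ^ 2 := by
    rw [hE1, Finset.sum_image]
    intro a _ b _ h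
    exact congrArg Prod.snd h
  have hsum2 : ∑ p ∈ E2, f p = ∑ i ∈ M, (x i - x l) ^ 2 := by
    rw [hE2, Finset.sum_image]
    intro a _ b _ h
    exact congrArg Prod.fst h
  have hfilter1 : Finset.univ.filter (fun j : Fin k => z < j) = insert l M := by
    ext j
    simp only [hM, Finset.mem_filter, Finset.mem_univ, true_and, Finset.mem_insert,
      Fin.lt_def, hz, hl, Fin.ext_iff]
    have := j.2
    omega
  have hlnM : l ∉ M := by
    simp [hM]
  have hsum1' : ∑ j ∈ Finset.univ.filter (fun j : Fin k => z < j), (x z - x j) ^ 2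
      = (x z - x l) ^ 2 + ∑ j ∈ M, (x z - x j) ^ 2 := by
    rw [hfilter1, Finset.sum_insert hlnM]
  have hMcard : (M.card : ℝ) = (k : ℝ) - 2 := by
    have : M = Finset.univ \ {z, l} := by
      ext j
      simp only [hM, Finset.mem_filter, Finset.mem_univ, true_and, Finset.mem_sdiff,
        Finset.mem_insert, Finset.mem_singleton, Fin.lt_def, hz, hl, Fin.ext_iff]
      have := j.2
      omega
    rw [this, Finset.card_sdiff_of_subset (by simp), Finset.card_pair hznel, Finset.card_univ,
      Fintype.card_fin]
    push_cast [Nat.cast_sub hk]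
    ring
  set D := x l - x z with hD
  have hkey : ∀ j ∈ M, D ^ 2 / 2 ≤ (x z - x j) ^ 2 + (x j - x l) ^ 2 := by
    intro j _
    nlinarith [sq_nonneg (x z - 2 * x j + x l)]
  have hMsum : (M.card : ℝ) * (D ^ 2 / 2) ≤ ∑ j ∈ M, ((x z - x j) ^ 2 + (x j - x l) ^ 2) := by
    have := Finset.card_nsmul_le_sum M (fun j => (x z - x j) ^ 2 + (x j - x l) ^ 2)
      (D ^ 2 / 2) hkey
    simpa [nsmul_eq_mul] using this
  have hunion : ∑ p ∈ E1 ∪ E2, f p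
      = (x z - x l) ^ 2 + ∑ j ∈ M, ((x z - x j) ^ 2 + (x j - x l) ^ 2) := by
    rw [Finset.sum_union hdisj, hsum1, hsum2, hsum1', Finset.sum_add_distrib]
    ring
  have hgoal : (k : ℝ) * D ^ 2 ≤ 2 * ∑ p ∈ S, f p := by
    have h1 : (x z - x l) ^ 2 = D ^ 2 := by rw [hD]; ring
    have h2 : ((k : ℝ) - 2) * (D ^ 2 / 2) ≤ ∑ j ∈ M, ((x z - x j) ^ 2 + (x j - x l) ^ 2) := by
      rw [← hMcard]; exact hMsum
    nlinarith [hstep1, hunion]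
  simpa [hD, hS, hf, hz, hl] using hgoal
end

section
/- Let e ⊆ V be a finite set of vertices with |e| = k ≥ 2 and let x : V → ℝ. Define Q_e(x) = max_{a,b ∈ e} (x_a - x_b)^2 and L_e(x) = Σ_{unordered pairs {a,b} ⊆ e} (x_a - x_b)^2. Then (2/(k(k-1)))·L_e(x) ≤ Q_e(x) ≤ (2/k)·L_e(x). -/
open Finset

lemma pair_le_sum_aux {V : Type*} [DecidableEq V] (e : Finset V) (x : V → ℝ)
    (a b u : V) (ha : a ∈ e) (hb : b ∈ e) (hab : a ≠ b) :
    (x u - x a) ^ 2 + (x u - x b) ^ 2 ≤ ∑ v ∈ e, (x u - x v) ^ 2 := by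
  have h : ({a, b} : Finset V) ⊆ e := by
    intro c hc
    simp only [Finset.mem_insert, Finset.mem_singleton] at hc
    rcases hc with h | h <;> simp [h, ha, hb]
  calc (x u - x a) ^ 2 + (x u - x b) ^ 2
      = ∑ v ∈ ({a, b} : Finset V), (x u - x v) ^ 2 :=
        (Finset.sum_pair (f := fun v => (x u - x v) ^ 2) hab).symm
    _ ≤ _ := Finset.sum_le_sum_of_subset_of_nonneg h (fun i _ _ => sq_nonneg _)

lemma key_lower_aux {V : Type*} [DecidableEq V] (e : Finset V) (k : ℕ) (hk : 2 ≤ k)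
    (hcard : e.card = k) (x : V → ℝ) (a b : V) (ha : a ∈ e) (hb : b ∈ e)
    (hab : x b ≤ x a)
    (hmax : ∀ c ∈ e, ∀ d ∈ e, (x c - x d) ^ 2 ≤ (x a - x b) ^ 2) :
    (k : ℝ) * (x a - x b) ^ 2 ≤ ∑ u ∈ e, ∑ v ∈ e, (x u - x v) ^ 2 := by
  by_cases hD : x a = x b
  · have h0 : (x a - x b) ^ 2 = 0 := by rw [hD]; ring
    rw [h0, mul_zero]
    exact Finset.sum_nonneg fun u _ => Finset.sum_nonneg fun v _ => sq_nonneg _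
  · have hane : a ≠ b := fun h => hD (by rw [h])
    have hub : ∀ c ∈ e, x c ≤ x a := by
      intro c hc; nlinarith [hmax c hc b hb]
    have hlb : ∀ c ∈ e, x b ≤ x c := by
      intro c hc; nlinarith [hmax a ha c hc]
    have hG : ∀ v ∈ e, (x a - x b) ^ 2 / 2 ≤ (x a - x v) ^ 2 + (x b - x v) ^ 2 := by
      intro v hv
      have h1 := hub v hv
      have h2 := hlb v hv
      nlinarith [sq_nonneg (x a + x b - 2 * x v)]
    have hbe : b ∈ e.erase a := Finset.mem_erase.mpr ⟨hane.symm, hb⟩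
    set r := (e.erase a).erase b with hr
    have hre : r ⊆ e := (Finset.erase_subset _ _).trans (Finset.erase_subset _ _)
    have hrcard : r.card = k - 2 := by
      rw [hr, Finset.card_erase_of_mem hbe, Finset.card_erase_of_mem ha, hcard]
      omega
    have cast2 : ((k - 2 : ℕ) : ℝ) = (k : ℝ) - 2 := by
      push_cast [Nat.cast_sub hk]; ring
    have hrest_g : ((k : ℝ) - 2) * ((x a - x b) ^ 2 / 2)
        ≤ ∑ v ∈ r, ((x a - x v) ^ 2 + (x b - x v) ^ 2) := by
      have := Finset.card_nsmul_le_sum r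
        (fun v => (x a - x v) ^ 2 + (x b - x v) ^ 2) ((x a - x b) ^ 2 / 2)
        (fun v hv => hG v (hre hv))
      rwa [hrcard, nsmul_eq_mul, cast2] at this
    have hrest_f : ((k : ℝ) - 2) * ((x a - x b) ^ 2 / 2)
        ≤ ∑ u ∈ r, ∑ v ∈ e, (x u - x v) ^ 2 := by
      have hpt : ∀ u ∈ r, (x a - x b) ^ 2 / 2 ≤ ∑ v ∈ e, (x u - x v) ^ 2 := by
        intro u hu
        have h1 := pair_le_sum_aux e x a b u ha hb hane
        have h2 := hG u (hre hu)
        nlinarith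
      have := Finset.card_nsmul_le_sum r _ ((x a - x b) ^ 2 / 2) hpt
      rwa [hrcard, nsmul_eq_mul, cast2] at this
    have hsplit1 : ∑ u ∈ e, ∑ v ∈ e, (x u - x v) ^ 2
        = (∑ v ∈ e, (x a - x v) ^ 2) + (∑ v ∈ e, (x b - x v) ^ 2)
          + ∑ u ∈ r, ∑ v ∈ e, (x u - x v) ^ 2 := by
      rw [← Finset.add_sum_erase e _ ha, ← Finset.add_sum_erase (e.erase a) _ hbe]
      ring
    have hsplit2 : ∑ v ∈ e, ((x a - x v) ^ 2 + (x b - x v) ^ 2)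
        = ((x a - x a) ^ 2 + (x b - x a) ^ 2) + ((x a - x b) ^ 2 + (x b - x b) ^ 2)
          + ∑ v ∈ r, ((x a - x v) ^ 2 + (x b - x v) ^ 2) := by
      rw [← Finset.add_sum_erase e _ ha, ← Finset.add_sum_erase (e.erase a) _ hbe]
      rw [hr]
      ring
    have hsum_add : (∑ v ∈ e, (x a - x v) ^ 2) + (∑ v ∈ e, (x b - x v) ^ 2)
        = ∑ v ∈ e, ((x a - x v) ^ 2 + (x b - x v) ^ 2) := Finset.sum_add_distrib.symm
    rw [hsplit1]
    nlinarith [hrest_g, hrest_f, hsum_add, hsplit2]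

lemma key_upper_aux {V : Type*} [DecidableEq V] (e : Finset V) (k : ℕ)
    (hcard : e.card = k) (x : V → ℝ) (Q : ℝ) (hQ0 : 0 ≤ Q)
    (hQ : ∀ c ∈ e, ∀ d ∈ e, (x c - x d) ^ 2 ≤ Q) :
    ∑ u ∈ e, ∑ v ∈ e, (x u - x v) ^ 2 ≤ (k : ℝ) * ((k : ℝ) - 1) * Q := by
  rcases Nat.eq_zero_or_pos k with hk0 | hkpos
  · have : e = ∅ := Finset.card_eq_zero.mp (by omega)
    simp [this, hk0]
  have cast1 : ((k - 1 : ℕ) : ℝ) = (k : ℝ) - 1 := by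
    push_cast [Nat.cast_sub hkpos]; ring
  have hinner : ∀ u ∈ e, ∑ v ∈ e, (x u - x v) ^ 2 ≤ ((k : ℝ) - 1) * Q := by
    intro u hu
    rw [← Finset.add_sum_erase e _ hu]
    have h1 : (x u - x u) ^ 2 = 0 := by ring
    have h2 : ∑ v ∈ e.erase u, (x u - x v) ^ 2 ≤ ((k : ℝ) - 1) * Q := by
      have := Finset.sum_le_card_nsmul (e.erase u) (fun v => (x u - x v) ^ 2) Q
        (fun v hv => hQ u hu v (Finset.mem_of_mem_erase hv))
      rwa [Finset.card_erase_of_mem hu, hcard, nsmul_eq_mul, cast1] at this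
    linarith
  have := Finset.sum_le_card_nsmul e (fun u => ∑ v ∈ e, (x u - x v) ^ 2)
    (((k : ℝ) - 1) * Q) hinner
  rw [hcard, nsmul_eq_mul] at this
  linarith [this]

theorem stmt_3 {V : Type*} [Fintype V] [DecidableEq V]
    (e : Finset V) (k : ℕ) (hk : 2 ≤ k) (hcard : e.card = k) (x : V → ℝ) :
    let Q : ℝ := (e ×ˢ e).sup'
      (by
        have : e.Nonempty := Finset.card_pos.mp (by omega)
        exact this.product this)
      (fun p => (x p.1 - x p.2) ^ 2)
    let L : ℝ := (∑ a ∈ e, ∑ b ∈ e, (x a - x b) ^ 2) / 2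
    2 / ((k : ℝ) * (k - 1)) * L ≤ Q ∧ Q ≤ 2 / (k : ℝ) * L := by
  intro Q L
  have hne : e.Nonempty := Finset.card_pos.mp (by omega)
  have hQdef : Q = (e ×ˢ e).sup' (hne.product hne) (fun p => (x p.1 - x p.2) ^ 2) := rfl
  have hL : L = (∑ a ∈ e, ∑ b ∈ e, (x a - x b) ^ 2) / 2 := rfl
  obtain ⟨p, hp, hQeq⟩ := Finset.exists_mem_eq_sup' (hne.product hne)
    (fun p => (x p.1 - x p.2) ^ 2)
  rw [Finset.mem_product] at hp
  have hQub : ∀ c ∈ e, ∀ d ∈ e, (x c - x d) ^ 2 ≤ Q := by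
    intro c hc d hd
    rw [hQdef]
    have hm : (c, d) ∈ e ×ˢ e := Finset.mem_product.mpr ⟨hc, hd⟩
    exact Finset.le_sup' (fun p => (x p.1 - x p.2) ^ 2) hm
  have hQval : Q = (x p.1 - x p.2) ^ 2 := by rw [hQdef, hQeq]
  have hQ0 : 0 ≤ Q := by rw [hQval]; exact sq_nonneg _
  have hS2 : (k : ℝ) * Q ≤ ∑ u ∈ e, ∑ v ∈ e, (x u - x v) ^ 2 := by
    rcases le_total (x p.2) (x p.1) with hle | hle
    · have := key_lower_aux e k hk hcard x p.1 p.2 hp.1 hp.2 hle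
        (fun c hc d hd => hQval ▸ hQub c hc d hd)
      rwa [← hQval] at this
    · have hQval' : Q = (x p.2 - x p.1) ^ 2 := by rw [hQval]; ring
      have := key_lower_aux e k hk hcard x p.2 p.1 hp.2 hp.1 hle
        (fun c hc d hd => hQval' ▸ hQub c hc d hd)
      rwa [← hQval'] at this
  have hS1 : ∑ u ∈ e, ∑ v ∈ e, (x u - x v) ^ 2 ≤ (k : ℝ) * ((k : ℝ) - 1) * Q :=
    key_upper_aux e k hcard x Q hQ0 hQub
  have hk2 : (2 : ℝ) ≤ (k : ℝ) := by exact_mod_cast hk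
  have hkpos : (0 : ℝ) < (k : ℝ) := by linarith
  have hk1pos : (0 : ℝ) < (k : ℝ) * ((k : ℝ) - 1) := by nlinarith
  constructor
  · rw [div_mul_eq_mul_div, div_le_iff₀ hk1pos, hL]
    linarith
  · rw [div_mul_eq_mul_div, le_div_iff₀ hkpos, hL]
    linarith
end

section
/- Effective resistances in a connected weighted graph satisfy the triangle inequality: for all vertices a, b, c, r_{ab} ≤ r_{ac} + r_{cb}, where r_{uv} = (1_u - 1_v)ᵀ L_G⁺ (1_u - 1_v) and L_G⁺ is the Moore–Penrose pseudoinverse of the Laplacian. -/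
open Matrix

section Aux

variable {V : Type*} [Fintype V] [DecidableEq V]

private lemma lap_mulVec_apply (w : V → V → ℝ) (hdiag : ∀ i, w i i = 0)
    (L : Matrix V V ℝ)
    (hL : ∀ i j, L i j = if i = j then ∑ k, w i k else -(w i j))
    (φ : V → ℝ) (u : V) :
    (L.mulVec φ) u = ∑ k, w u k * (φ u - φ k) := by
  have h : ∀ k, L u k * φ k =
      (if u = k then ((∑ j, w u j) + w u k) * φ k else 0) - w u k * φ k := by
    intro k
    rw [hL]
    split
    · next h => subst h; rw [hdiag]; ring
    · ring
  simp only [mulVec, dotProduct]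
  rw [Finset.sum_congr rfl fun k _ => h k, Finset.sum_sub_distrib,
    Finset.sum_ite_eq Finset.univ u, if_pos (Finset.mem_univ u), hdiag]
  rw [add_zero, Finset.sum_mul, ← Finset.sum_sub_distrib]
  exact Finset.sum_congr rfl fun k _ => by ring

private lemma lap_quad (w : V → V → ℝ) (hsymm : ∀ i j, w i j = w j i)
    (hdiag : ∀ i, w i i = 0)
    (L : Matrix V V ℝ)
    (hL : ∀ i j, L i j = if i = j then ∑ k, w i k else -(w i j))
    (x : V → ℝ) :
    2 * (x ⬝ᵥ L.mulVec x) = ∑ i, ∑ j, w i j * (x i - x j)^2 := by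
  have swap : ∑ i, ∑ j, (w i j * x i^2 - w i j * (x i * x j))
      = ∑ i, ∑ j, (w i j * x j^2 - w i j * (x i * x j)) := by
    rw [Finset.sum_comm]
    exact Finset.sum_congr rfl fun j _ => Finset.sum_congr rfl fun i _ => by
      rw [hsymm i j]; ring
  simp only [dotProduct]
  simp_rw [lap_mulVec_apply w hdiag L hL x, Finset.mul_sum]
  calc ∑ i, ∑ j, 2 * (x i * (w i j * (x i - x j)))
      = ∑ i, ∑ j, ((w i j * x i^2 - w i j * (x i * x j))
          + (w i j * x i^2 - w i j * (x i * x j))) := by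
        exact Finset.sum_congr rfl fun i _ => Finset.sum_congr rfl fun j _ => by ring
    _ = ∑ i, ∑ j, (w i j * x i^2 - w i j * (x i * x j))
          + ∑ i, ∑ j, (w i j * x i^2 - w i j * (x i * x j)) := by
        simp_rw [Finset.sum_add_distrib]
    _ = ∑ i, ∑ j, (w i j * x i^2 - w i j * (x i * x j))
          + ∑ i, ∑ j, (w i j * x j^2 - w i j * (x i * x j)) := by rw [swap]
    _ = ∑ i, ∑ j, w i j * (x i - x j)^2 := by
        simp_rw [← Finset.sum_add_distrib]
        exact Finset.sum_congr rfl fun i _ => Finset.sum_congr rfl fun j _ => by ring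

private lemma lap_const (w : V → V → ℝ) (hsymm : ∀ i j, w i j = w j i)
    (hnonneg : ∀ i j, 0 ≤ w i j) (hdiag : ∀ i, w i i = 0)
    (hconn : (SimpleGraph.fromRel fun i j => 0 < w i j).Connected)
    (L : Matrix V V ℝ)
    (hL : ∀ i j, L i j = if i = j then ∑ k, w i k else -(w i j))
    (x : V → ℝ) (hx : x ⬝ᵥ L.mulVec x = 0) :
    ∀ i j, x i = x j := by
  have hq : ∑ i, ∑ j, w i j * (x i - x j)^2 = 0 := by
    rw [← lap_quad w hsymm hdiag L hL x, hx, mul_zero]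
  have hterm : ∀ i j, w i j * (x i - x j)^2 = 0 := by
    have h1 := (Finset.sum_eq_zero_iff_of_nonneg (fun i _ =>
      Finset.sum_nonneg fun j _ => mul_nonneg (hnonneg i j) (sq_nonneg _))).mp hq
    intro i j
    have h2 := (Finset.sum_eq_zero_iff_of_nonneg (fun j _ =>
      mul_nonneg (hnonneg i j) (sq_nonneg _))).mp (h1 i (Finset.mem_univ i))
    exact h2 j (Finset.mem_univ j)
  have hedge : ∀ i j, 0 < w i j → x i = x j := by
    intro i j hw
    have := hterm i j
    have h2 : (x i - x j)^2 = 0 := by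
      rcases mul_eq_zero.mp this with h | h
      · exact absurd h (ne_of_gt hw)
      · exact h
    have := pow_eq_zero_iff (n := 2) (by norm_num) |>.mp h2
    linarith [sub_eq_zero.mp this]
  intro i j
  obtain ⟨p⟩ := hconn i j
  induction p with
  | nil => rfl
  | cons h p ih =>
    rw [SimpleGraph.fromRel_adj] at h
    rcases h.2 with hw | hw
    · rw [hedge _ _ hw]; exact ih
    · rw [hedge _ _ (by rwa [hsymm])]; exact ih

private lemma lap_sum_mulVec (w : V → V → ℝ) (hsymm : ∀ i j, w i j = w j i)
    (hdiag : ∀ i, w i i = 0)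
    (L : Matrix V V ℝ)
    (hL : ∀ i j, L i j = if i = j then ∑ k, w i k else -(w i j))
    (z : V → ℝ) : ∑ i, (L.mulVec z) i = 0 := by
  have h1 : ∑ i, (L.mulVec z) i = (fun _ => (1:ℝ)) ⬝ᵥ L.mulVec z := by
    simp [dotProduct]
  rw [h1, dotProduct_mulVec]
  have hs : Lᵀ = L := by
    ext i j
    simp only [transpose_apply, hL]
    by_cases h : i = j
    · subst h; simp
    · rw [if_neg h, if_neg (Ne.symm h), hsymm]
  have h2 : L.vecMul (fun _ => (1:ℝ)) = 0 := by
    funext j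
    have hv : L.vecMul (fun _ => (1:ℝ)) = L.mulVec (fun _ => 1) := by
      conv_lhs => rw [← hs]
      rw [vecMul_transpose]
    rw [hv, lap_mulVec_apply w hdiag L hL]
    simp
  rw [h2, zero_dotProduct]

private lemma lap_fix [Nonempty V]
    (L : Matrix V V ℝ)
    (hconst : ∀ x : V → ℝ, x ⬝ᵥ L.mulVec x = 0 → ∀ i j, x i = x j)
    (hsum : ∀ z : V → ℝ, ∑ i, (L.mulVec z) i = 0)
    (M : Matrix V V ℝ)
    (hPL : (L * M) * L = L) (hPP : (L * M) * (L * M) = L * M)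
    (hPs : (L * M).IsSymm)
    (x : V → ℝ) (hx : ∑ i, x i = 0) :
    L.mulVec (M.mulVec x) = x := by
  set P := L * M with hP
  set y : V → ℝ := x - P.mulVec x with hy
  have hPy : P.mulVec y = 0 := by
    rw [hy, mulVec_sub, mulVec_mulVec, hPP, sub_self]
  have hyL : y ⬝ᵥ L.mulVec y = 0 := by
    have h1 : L.mulVec y = P.mulVec (L.mulVec y) := by
      rw [mulVec_mulVec, hPL]
    rw [h1, dotProduct_mulVec]
    have h2 : P.vecMul y = P.mulVec y := by
      conv_lhs => rw [← hPs.eq]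
      rw [vecMul_transpose]
    rw [h2, hPy, zero_dotProduct]
  have hyconst := hconst y hyL
  have hPsum : ∑ i, (P.mulVec x) i = 0 := by
    rw [hP, ← mulVec_mulVec]; exact hsum _
  have hysum : ∑ i, y i = 0 := by
    simp only [hy, Pi.sub_apply, Finset.sum_sub_distrib, hx, hPsum, sub_zero]
  have hyzero : y = 0 := by
    obtain ⟨i₀⟩ := ‹Nonempty V›
    have hcsum : ∑ i, y i = (Fintype.card V : ℝ) * y i₀ := by
      rw [Finset.sum_congr rfl fun i _ => hyconst i i₀, Finset.sum_const,
        Finset.card_univ, nsmul_eq_mul]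
    rw [hysum] at hcsum
    have hcard : (Fintype.card V : ℝ) ≠ 0 := by
      exact_mod_cast Fintype.card_pos.ne'
    have h0 : y i₀ = 0 := by
      rcases mul_eq_zero.mp hcsum.symm with h | h
      · exact absurd h hcard
      · exact h
    funext i
    rw [hyconst i i₀, h0]; rfl
  have hfix : P.mulVec x = x := by
    have := sub_eq_zero.mp (hy ▸ hyzero : x - P.mulVec x = 0)
    exact this.symm
  rw [mulVec_mulVec, ← hP]
  exact hfix

private lemma lap_max (w : V → V → ℝ) (hsymm : ∀ i j, w i j = w j i)
    (hnonneg : ∀ i j, 0 ≤ w i j)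
    (hconn : (SimpleGraph.fromRel fun i j => 0 < w i j).Connected)
    (L : Matrix V V ℝ)
    (hApply : ∀ (φ : V → ℝ) (u : V), (L.mulVec φ) u = ∑ k, w u k * (φ u - φ k))
    (φ : V → ℝ) (s t : V)
    (hφ : L.mulVec φ = Pi.single s 1 - Pi.single t 1) (v : V) :
    φ v ≤ φ s := by
  obtain ⟨m, -, hm⟩ := Finset.exists_max_image Finset.univ φ ⟨v, Finset.mem_univ v⟩
  have hm' : ∀ a, φ a ≤ φ m := fun a => hm a (Finset.mem_univ a)
  have step : ∀ u u', φ u = φ m → u ≠ s → 0 < w u u' → φ u' = φ m := by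
    intro u u' hu hus hw
    have hval : (L.mulVec φ) u ≤ 0 := by
      rw [hφ]
      simp only [Pi.sub_apply, Pi.single_apply]
      rw [if_neg hus]
      split <;> norm_num
    rw [hApply] at hval
    have hterms : ∀ k ∈ Finset.univ, 0 ≤ w u k * (φ u - φ k) := by
      intro k _
      apply mul_nonneg (hnonneg u k)
      rw [hu]
      linarith [hm' k]
    have hzero : ∀ k ∈ Finset.univ, w u k * (φ u - φ k) = 0 := by
      have hle : ∑ k, w u k * (φ u - φ k) = 0 :=
        le_antisymm hval (Finset.sum_nonneg hterms)
      exact (Finset.sum_eq_zero_iff_of_nonneg hterms).mp hle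
    have := hzero u' (Finset.mem_univ u')
    rcases mul_eq_zero.mp this with h | h
    · exact absurd h (ne_of_gt hw)
    · rw [← hu]; linarith [sub_eq_zero.mp h]
  have key : ∀ (u : V) (p : (SimpleGraph.fromRel fun i j => 0 < w i j).Walk u s),
      φ u = φ m → φ s = φ m := by
    intro u p
    induction p with
    | nil => exact fun h => h
    | cons h q ih =>
      rename_i x y z
      intro hu
      by_cases hus : x = z
      · rw [← hus]; exact hu
      · refine ih hφ step ?_
        rw [SimpleGraph.fromRel_adj] at h
        rcases h.2 with hw | hw
        · exact step _ _ hu hus hw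
        · exact step _ _ hu hus (by rwa [hsymm])
  obtain ⟨p⟩ := hconn m s
  rw [key m p rfl]
  exact hm' v

end Aux

theorem stmt_12 {V : Type*} [Fintype V] [DecidableEq V]
    (w : V → V → ℝ) (hsymm : ∀ i j, w i j = w j i) (hnonneg : ∀ i j, 0 ≤ w i j)
    (hdiag : ∀ i, w i i = 0)
    (hconn : (SimpleGraph.fromRel fun i j => 0 < w i j).Connected)
    (L : Matrix V V ℝ)
    (hL : ∀ i j, L i j = if i = j then ∑ k, w i k else -(w i j))
    (Lp : Matrix V V ℝ)
    (h1 : L * Lp * L = L) (h2 : Lp * L * Lp = Lp)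
    (h3 : (L * Lp).IsSymm) (h4 : (Lp * L).IsSymm)
    (r : V → V → ℝ)
    (hr : ∀ u v, r u v =
      (Pi.single u 1 - Pi.single v 1) ⬝ᵥ Lp.mulVec (Pi.single u 1 - Pi.single v 1))
    (a b c : V) :
    r a b ≤ r a c + r c b := by
  haveI : Nonempty V := hconn.nonempty
  have hApply := lap_mulVec_apply w hdiag L hL
  have hconst := lap_const w hsymm hnonneg hdiag hconn L hL
  have hsum := lap_sum_mulVec w hsymm hdiag L hL
  have hs : Lᵀ = L := by
    ext i j
    simp only [transpose_apply, hL]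
    by_cases h : i = j
    · subst h; simp
    · rw [if_neg h, if_neg (Ne.symm h), hsymm]
  -- projection facts for Lp
  have hPP1 : (L * Lp) * (L * Lp) = L * Lp := by
    rw [← mul_assoc, h1]
  -- projection facts for Lpᵀ
  have hLpT : L * Lpᵀ = Lp * L := by
    calc L * Lpᵀ = Lᵀ * Lpᵀ := by rw [hs]
      _ = (Lp * L)ᵀ := (transpose_mul Lp L).symm
      _ = Lp * L := h4
  have hPL' : (L * Lpᵀ) * L = L := by
    have h1t : Lᵀ * (Lpᵀ * Lᵀ) = Lᵀ := by
      rw [← transpose_mul, ← transpose_mul, h1]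
    rw [hs] at h1t
    rw [mul_assoc]
    exact h1t
  have hPP' : (L * Lpᵀ) * (L * Lpᵀ) = L * Lpᵀ := by
    rw [hLpT, ← mul_assoc, h2]
  have hPs' : (L * Lpᵀ).IsSymm := by
    rw [hLpT]; exact h4
  -- the two vectors
  set u : V → ℝ := Pi.single a 1 - Pi.single c 1 with hu
  set v : V → ℝ := Pi.single c 1 - Pi.single b 1 with hv
  have hsingle_sum : ∀ x : V, ∑ i, Pi.single x (1:ℝ) i = 1 := by
    intro x
    simp [Pi.single_apply]
  have hsumv : ∑ i, v i = 0 := by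
    simp only [hv, Pi.sub_apply, Finset.sum_sub_distrib, hsingle_sum, sub_self]
  have hsd : ∀ (x : V) (ψ : V → ℝ), Pi.single x (1:ℝ) ⬝ᵥ ψ = ψ x := by
    intro x ψ
    simp [dotProduct, Pi.single_apply]
  have hdotu : ∀ ψ : V → ℝ, u ⬝ᵥ ψ = ψ a - ψ c := by
    intro ψ
    rw [hu, sub_dotProduct, hsd, hsd]
  -- first cross term
  have t1 : u ⬝ᵥ Lp.mulVec v ≤ 0 := by
    have hfix : L.mulVec (Lp.mulVec v) = v :=
      lap_fix L hconst hsum Lp h1 hPP1 h3 v hsumv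
    rw [hv] at hfix
    have hmax := lap_max w hsymm hnonneg hconn L hApply (Lp.mulVec v) c b hfix a
    rw [hdotu]
    linarith
  -- second cross term
  have t2 : v ⬝ᵥ Lp.mulVec u ≤ 0 := by
    have hswap : v ⬝ᵥ Lp.mulVec u = u ⬝ᵥ Lpᵀ.mulVec v := by
      rw [dotProduct_mulVec, ← mulVec_transpose, dotProduct_comm]
    rw [hswap]
    have hfix : L.mulVec (Lpᵀ.mulVec v) = v :=
      lap_fix L hconst hsum Lpᵀ hPL' hPP' hPs' v hsumv
    rw [hv] at hfix
    have hmax := lap_max w hsymm hnonneg hconn L hApply (Lpᵀ.mulVec v) c b hfix a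
    rw [hdotu]
    linarith
  -- conclude
  rw [hr a b, hr a c, hr c b]
  have huv : (Pi.single a 1 - Pi.single b 1 : V → ℝ) = u + v := by
    rw [hu, hv, sub_add_sub_cancel]
  rw [huv, mulVec_add, add_dotProduct, dotProduct_add, dotProduct_add, ← hu, ← hv]
  linarith
end

section
/- In a connected graph G on n vertices, the sum over all edges (a,b) of the effective resistance r_{ab} equals n - 1. -/
/-
Write `L` for the Laplacian and `P` for the given pseudoinverse. Expanding the quadratic form,
`r_ab = (P a a - P b a) + (P b b - P a b)`, and summing over both orientations of every edge gives
`2 ∑_{a ~ b} (P a a - P b a) = 2 trace (L P)`, since `(L P) a a = ∑_{b ~ a} (P a a - P b a)`.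
From `L P L = L` the matrix `L P` is idempotent with the same range as `L`, so its trace is
`rank L = n - #(connected components) = n - 1`.
-/

open Matrix

/-- Effective resistance between two vertices, given a pseudoinverse `Lp` of the Laplacian. -/
def effR {V : Type*} [Fintype V] [DecidableEq V] (Lp : Matrix V V ℝ) (a b : V) : ℝ :=
  (Pi.single a 1 - Pi.single b 1) ⬝ᵥ Lp.mulVec (Pi.single a 1 - Pi.single b 1)

lemma effR_symm {V : Type*} [Fintype V] [DecidableEq V] (Lp : Matrix V V ℝ) (a b : V) :
    effR Lp a b = effR Lp b a := by
  unfold effR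
  rw [show (Pi.single a 1 - Pi.single b 1 : V → ℝ) = -(Pi.single b 1 - Pi.single a 1) by
    rw [neg_sub]]
  rw [Matrix.mulVec_neg, dotProduct_neg, neg_dotProduct, neg_neg]

namespace Matrix

variable {n K : Type*} [Fintype n] [Field K]

theorem trace_eq_rank_of_isIdempotentElem [DecidableEq n] {P : Matrix n n K}
    (hP : IsIdempotentElem P) : P.trace = P.rank := by
  rw [rank, ← toLin'_apply', ← trace_toLin'_eq]
  exact (LinearMap.IsIdempotentElem.isProj_range _ (hP.map toLinAlgEquiv')).trace

theorem rank_mul_eq_left_of_mul_mul_self {A B : Matrix n n K} (h : A * B * A = A) :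
    (A * B).rank = A.rank :=
  le_antisymm (rank_mul_le_left A B) (by
    conv_lhs => rw [← h]
    exact rank_mul_le_left _ _)

theorem trace_mul_eq_rank_of_mul_mul_self [DecidableEq n] {A B : Matrix n n K}
    (h : A * B * A = A) : (A * B).trace = A.rank := by
  have hidem : IsIdempotentElem (A * B) := by rw [IsIdempotentElem, ← mul_assoc, h]
  rw [trace_eq_rank_of_isIdempotentElem hidem, rank_mul_eq_left_of_mul_mul_self h]

end Matrix

namespace SimpleGraph

theorem Connected.card_connectedComponent {V : Type*} {G : SimpleGraph V}
    [Fintype G.ConnectedComponent] (h : G.Connected) : Fintype.card G.ConnectedComponent = 1 := by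
  have := h.preconnected.subsingleton_connectedComponent
  exact Fintype.card_eq_one_iff.2
    ⟨G.connectedComponentMk h.nonempty.some, fun _ ↦ Subsingleton.elim _ _⟩

variable {V M : Type*} [Fintype V] (G : SimpleGraph V) [DecidableRel G.Adj] [AddCommMonoid M]

theorem sum_darts_edge_eq_two_nsmul [DecidableEq V] (g : Sym2 V → M) :
    ∑ d : G.Dart, g d.edge = 2 • ∑ e ∈ G.edgeFinset, g e := by
  rw [← Finset.sum_fiberwise_of_maps_to (g := Dart.edge) (fun d _ ↦ mem_edgeFinset.2 d.edge_mem),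
    Finset.smul_sum]
  refine Finset.sum_congr rfl fun e he ↦ ?_
  rw [Finset.sum_congr rfl fun d hd ↦ by rw [(Finset.mem_filter.1 hd).2], Finset.sum_const,
    dart_edge_fiber_card G e (mem_edgeFinset.1 he)]

theorem sum_darts_eq_sum_sum_neighborFinset [DecidableEq V] (f : V → V → M) :
    ∑ d : G.Dart, f d.fst d.snd = ∑ a, ∑ b ∈ G.neighborFinset a, f a b := by
  rw [← Finset.sum_fiberwise (g := fun d : G.Dart ↦ d.fst)]
  refine Finset.sum_congr rfl fun a _ ↦ ?_
  rw [dart_fst_fiber, Finset.sum_image fun _ _ _ _ h ↦ G.dartOfNeighborSet_injective a h]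
  exact (Finset.sum_subtype _ (fun _ ↦ mem_neighborFinset G a _) (f a)).symm

theorem sum_sum_neighborFinset_comm (f : V → V → M) :
    ∑ a, ∑ b ∈ G.neighborFinset a, f a b = ∑ a, ∑ b ∈ G.neighborFinset a, f b a :=
  Finset.sum_comm' fun a b ↦ by simp [adj_comm]

theorem lapMatrix_mul_apply_self [DecidableEq V] {R : Type*} [CommRing R] (A : Matrix V V R)
    (a : V) : (G.lapMatrix R * A) a a = ∑ b ∈ G.neighborFinset a, (A a a - A b a) := by
  change (G.lapMatrix R *ᵥ fun b ↦ A b a) a = _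
  rw [lapMatrix_mulVec_apply, Finset.sum_sub_distrib, Finset.sum_const,
    card_neighborFinset_eq_degree, nsmul_eq_mul]

theorem rank_lapMatrix_add_card_connectedComponent [DecidableEq V] :
    (G.lapMatrix ℝ).rank + Fintype.card G.ConnectedComponent = Fintype.card V := by
  rw [card_connectedComponent_eq_finrank_ker_toLin'_lapMatrix, rank, ← toLin'_apply',
    LinearMap.finrank_range_add_finrank_ker, Module.finrank_fintype_fun_eq_card]

end SimpleGraph

section EffectiveResistance

variable {V : Type*} [Fintype V] [DecidableEq V]

theorem effR_eq_sub_add_sub (Lp : Matrix V V ℝ) (a b : V) :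
    effR Lp a b = (Lp a a - Lp b a) + (Lp b b - Lp a b) := by
  simp only [effR, mulVec_sub, dotProduct_sub, sub_dotProduct, mulVec_single_one,
    single_one_dotProduct, col_apply]
  ring

theorem sum_edgeFinset_effR_eq_trace_lapMatrix_mul (G : SimpleGraph V) [DecidableRel G.Adj]
    (Lp : Matrix V V ℝ) :
    ∑ e ∈ G.edgeFinset, Sym2.lift ⟨effR Lp, effR_symm Lp⟩ e = (G.lapMatrix ℝ * Lp).trace := by
  have hdouble : 2 * ∑ e ∈ G.edgeFinset, Sym2.lift ⟨effR Lp, effR_symm Lp⟩ e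
      = 2 * (G.lapMatrix ℝ * Lp).trace := calc
    _ = ∑ d : G.Dart, effR Lp d.fst d.snd := by
      have hdarts := G.sum_darts_edge_eq_two_nsmul (Sym2.lift ⟨effR Lp, effR_symm Lp⟩)
      rw [nsmul_eq_mul, Nat.cast_ofNat] at hdarts
      exact hdarts.symm
    _ = ∑ a, ∑ b ∈ G.neighborFinset a, ((Lp a a - Lp b a) + (Lp b b - Lp a b)) := by
      simp only [effR_eq_sub_add_sub]
      exact G.sum_darts_eq_sum_sum_neighborFinset fun a b ↦ (Lp a a - Lp b a) + (Lp b b - Lp a b)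
    _ = 2 * ∑ a, ∑ b ∈ G.neighborFinset a, (Lp a a - Lp b a) := by
      simp only [Finset.sum_add_distrib]
      rw [G.sum_sum_neighborFinset_comm fun a b ↦ Lp b b - Lp a b]
      ring
    _ = 2 * (G.lapMatrix ℝ * Lp).trace := by
      simp only [trace, diag_apply, G.lapMatrix_mul_apply_self]
  linarith

end EffectiveResistance

theorem stmt_13_general {V : Type*} [Fintype V] [DecidableEq V]
    (G : SimpleGraph V) [DecidableRel G.Adj] (hconn : G.Connected)
    (Lp : Matrix V V ℝ)
    (h1 : G.lapMatrix ℝ * Lp * G.lapMatrix ℝ = G.lapMatrix ℝ) :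
    ∑ e ∈ G.edgeFinset, Sym2.lift ⟨effR Lp, effR_symm Lp⟩ e =
      (Fintype.card V : ℝ) - 1 := by
  have hrank := G.rank_lapMatrix_add_card_connectedComponent
  rw [hconn.card_connectedComponent] at hrank
  rw [sum_edgeFinset_effR_eq_trace_lapMatrix_mul, trace_mul_eq_rank_of_mul_mul_self h1, ← hrank]
  push_cast
  ring

theorem stmt_13 {V : Type*} [Fintype V] [DecidableEq V]
    (G : SimpleGraph V) [DecidableRel G.Adj] (hconn : G.Connected)
    (Lp : Matrix V V ℝ)
    (h1 : G.lapMatrix ℝ * Lp * G.lapMatrix ℝ = G.lapMatrix ℝ)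
    (h2 : Lp * G.lapMatrix ℝ * Lp = Lp)
    (h3 : (G.lapMatrix ℝ * Lp).IsSymm) (h4 : (Lp * G.lapMatrix ℝ).IsSymm) :
    ∑ e ∈ G.edgeFinset, Sym2.lift ⟨effR Lp, effR_symm Lp⟩ e =
      (Fintype.card V : ℝ) - 1 :=
  stmt_13_general G hconn Lp h1
end

section
/- Let f : ℕ → ℝ≥0 satisfy |2·f(i+1) - f(i)| ≤ 10·√(f(i)·log(f(i)·r)) for all i < k, and suppose f(0)·2^{-k} ≥ C·ε^{-2}·log(r/ε) for a sufficiently large absolute constant C (with 0 < ε ≤ 1, r ≥ 2). Then |2^k·f(k) - f(0)| ≤ ε·f(0). -/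
/-!
Put `g i = 2 ^ i * f i`, so `g 0 = f 0` and step `i` moves `g` by at most
`2 ^ i * 10 * √(f i * log (f i * r))`. With `A = f 0 / 2 ^ k` and `L = log (2 * A * r)`, as long as
`g i ≤ 2 * f 0` we have `f i ≤ 2 * A * 2 ^ (k - i)`, and that increment is at most
`2 ^ k * √(1800 * A * L) * (3 / 4) ^ (k - i)`: the increments grow geometrically towards the last
step, so their total is `O (2 ^ k * √(A * L)) = O (f 0 * √(L / A))`. The hypothesis makes
`L ≤ ε ^ 2 * A / 16200`, which turns this into `ε * f 0`, and also keeps `g i ≤ 2 * f 0` along the way.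
-/

open Real

theorem abs_sub_le_of_geometric_steps {g : ℕ → ℝ} {k : ℕ} {c q : ℝ} (hc : 0 ≤ c) (hq0 : 0 ≤ q)
    (hq1 : q < 1)
    (hstep : ∀ i < k, |g i - g 0| ≤ c * q / (1 - q) → |g (i + 1) - g i| ≤ c * q ^ (k - i)) :
    |g k - g 0| ≤ c * q / (1 - q) := by
  have h1q : 0 < 1 - q := sub_pos.2 hq1
  -- The sharper bound leaves room for the next step inside the geometric series.
  have key : ∀ i ≤ k, |g i - g 0| ≤ c * q ^ (k - i + 1) / (1 - q) := by
    intro i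
    induction i with
    | zero => intro _; simp only [sub_self, abs_zero]; positivity
    | succ n ih =>
      intro hn
      have ihn := ih (by omega)
      have hweak : c * q ^ (k - n + 1) / (1 - q) ≤ c * q / (1 - q) := by
        gcongr
        exact pow_le_of_le_one hq0 hq1.le (by omega)
      have hsucc : k - n = k - (n + 1) + 1 := by omega
      calc |g (n + 1) - g 0| ≤ |g (n + 1) - g n| + |g n - g 0| := abs_sub_le _ _ _
        _ ≤ c * q ^ (k - n) + c * q ^ (k - n + 1) / (1 - q) :=
          add_le_add (hstep n hn (ihn.trans hweak)) ihn
        _ = c * q ^ (k - (n + 1) + 1) / (1 - q) := by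
          rw [← hsucc]; field_simp; ring
  simpa using key k le_rfl

theorem one_add_mul_two_pow_le (j : ℕ) : (1 + j : ℝ) * 2 ^ j ≤ 9 * (9 / 4) ^ j := by
  have hbern : 1 + j * (1 / 8 : ℝ) ≤ (9 / 8) ^ j :=
    calc 1 + j * (1 / 8 : ℝ) ≤ (1 + 1 / 8) ^ j := one_add_mul_le_pow (by norm_num) j
      _ = (9 / 8) ^ j := by norm_num
  calc (1 + j : ℝ) * 2 ^ j ≤ 9 * (9 / 8) ^ j * 2 ^ j := by gcongr; linarith
    _ = 9 * (9 / 4) ^ j := by rw [mul_assoc, ← mul_pow]; norm_num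

theorem sqrt_mul_log_le {A r x : ℝ} (j : ℕ) (hr : 0 < r) (hAr : 1 ≤ A * r) (hxr : 1 ≤ x * r)
    (hx : x ≤ 2 * A * 2 ^ j) :
    10 * √(x * log (x * r)) ≤ √(1800 * A * log (2 * A * r)) * (3 / 2) ^ j := by
  set L := log (2 * A * r)
  have hA : 0 < A := pos_of_mul_pos_left (by linarith) hr.le
  have hL2 : log 2 ≤ L := log_le_log (by norm_num) (by linarith)
  have hL : 0 ≤ L := (log_pos one_lt_two).le.trans hL2
  have hlog : log (x * r) ≤ (1 + j) * L :=
    calc log (x * r) ≤ log (2 * A * r * 2 ^ j) := log_le_log (by linarith) (by nlinarith)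
      _ = L + j * log 2 := by
        rw [log_mul (by positivity) (by positivity), log_pow]
      _ ≤ (1 + j) * L := by nlinarith
  have hsq : 100 * (x * log (x * r)) ≤ 1800 * A * L * ((3 / 2) ^ j) ^ 2 :=
    calc 100 * (x * log (x * r)) ≤ 100 * ((2 * A * 2 ^ j) * ((1 + j) * L)) := by
          gcongr; exact log_nonneg hxr
      _ = 200 * A * L * ((1 + j) * 2 ^ j) := by ring
      _ ≤ 200 * A * L * (9 * (9 / 4) ^ j) :=
        mul_le_mul_of_nonneg_left (one_add_mul_two_pow_le j) (by positivity)
      _ = 1800 * A * L * ((3 / 2) ^ j) ^ 2 := by rw [← pow_mul, mul_comm j, pow_mul]; ring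
  calc 10 * √(x * log (x * r)) = √(100 * (x * log (x * r))) := by
        rw [sqrt_mul (by norm_num : (0 : ℝ) ≤ 100), show (100 : ℝ) = 10 ^ 2 by norm_num,
          sqrt_sq (by norm_num)]
    _ ≤ √(1800 * A * L * ((3 / 2) ^ j) ^ 2) := sqrt_le_sqrt hsq
    _ = √(1800 * A * L) * (3 / 2) ^ j := by
      rw [sqrt_mul (by positivity), sqrt_sq (by positivity)]

theorem two_pow_mul_sqrt_mul_log_le {A r x : ℝ} {i k : ℕ} (hik : i ≤ k) (hr : 0 < r)
    (hAr : 1 ≤ A * r) (hxr : 1 ≤ x * r) (hx : 2 ^ i * x ≤ 2 * (2 ^ k * A)) :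
    2 ^ i * (10 * √(x * log (x * r))) ≤
      2 ^ k * √(1800 * A * log (2 * A * r)) * (3 / 4) ^ (k - i) := by
  obtain ⟨j, rfl⟩ := Nat.exists_eq_add_of_le hik
  rw [Nat.add_sub_cancel_left, pow_add]
  have hx' : x ≤ 2 * A * 2 ^ j :=
    le_of_mul_le_mul_left (by rw [pow_add] at hx; linarith) (by positivity : (0 : ℝ) < 2 ^ i)
  calc 2 ^ i * (10 * √(x * log (x * r))) ≤
        2 ^ i * (√(1800 * A * log (2 * A * r)) * (3 / 2) ^ j) :=
        mul_le_mul_of_nonneg_left (sqrt_mul_log_le j hr hAr hxr hx') (by positivity)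
    _ = 2 ^ i * 2 ^ j * √(1800 * A * log (2 * A * r)) * (3 / 4) ^ j := by
      rw [show (3 / 2 : ℝ) = 2 * (3 / 4) by norm_num, mul_pow]; ring

theorem three_mul_sqrt_le {A L ε : ℝ} (hA : 0 ≤ A) (hε : 0 ≤ ε) (h : 16200 * L ≤ ε ^ 2 * A) :
    3 * √(1800 * A * L) ≤ ε * A := by
  rw [show (3 : ℝ) = √(3 ^ 2) by rw [sqrt_sq (by norm_num)], ← sqrt_mul (by norm_num)]
  refine sqrt_le_iff.2 ⟨by positivity, ?_⟩
  nlinarith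

theorem log_two_le_log_div {r ε : ℝ} (hr : 2 ≤ r) (hε : 0 < ε) (hε1 : ε ≤ 1) :
    log 2 ≤ log (r / ε) :=
  log_le_log (by norm_num) (hr.trans (le_div_self (by linarith) hε hε1))

theorem log_le_div_of_sq_le {a x : ℝ} (ha : 0 < a) (h : (2 * a) ^ 2 ≤ x) : log x ≤ x / a := by
  have hx : 0 ≤ x := (sq_nonneg _).trans h
  have h2a : 2 * a ≤ √x := le_sqrt_of_sq_le h
  have hlog : log x ≤ 2 * √x := by
    have := log_le_sub_one_of_pos (by linarith : 0 < √x)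
    rw [log_sqrt hx] at this
    linarith
  rw [le_div_iff₀ ha]
  nlinarith [mul_self_sqrt hx]

theorem one_le_of_mul_inv_sq_mul_log_le {A r ε : ℝ} (hr : 2 ≤ r) (hε : 0 < ε) (hε1 : ε ≤ 1)
    (hA : 10 ^ 12 * ε⁻¹ ^ 2 * log (r / ε) ≤ A) : 1 ≤ A := by
  have hinv : 1 ≤ ε⁻¹ ^ 2 := one_le_pow₀ ((one_le_inv₀ hε).2 hε1)
  have hlog : 1 / 2 ≤ log (r / ε) := by
    linarith [log_two_gt_d9, log_two_le_log_div hr hε hε1]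
  calc (1 : ℝ) ≤ 10 ^ 12 * 1 * (1 / 2) := by norm_num
    _ ≤ 10 ^ 12 * ε⁻¹ ^ 2 * log (r / ε) := by gcongr
    _ ≤ A := hA

theorem log_two_mul_mul_le {A r ε : ℝ} (hr : 2 ≤ r) (hε : 0 < ε) (hε1 : ε ≤ 1)
    (hA : 10 ^ 12 * ε⁻¹ ^ 2 * log (r / ε) ≤ A) : 16200 * log (2 * A * r) ≤ ε ^ 2 * A := by
  have hA0 : 0 < A := one_pos.trans_le (one_le_of_mul_inv_sq_mul_log_le hr hε hε1 hA)
  set B := ε ^ 2 * A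
  have hB : 10 ^ 12 * log (r / ε) ≤ B := by
    calc 10 ^ 12 * log (r / ε) = ε ^ 2 * (10 ^ 12 * ε⁻¹ ^ 2 * log (r / ε)) := by field_simp
      _ ≤ B := mul_le_mul_of_nonneg_left hA (by positivity)
  have hlog2 := log_two_le_log_div hr hε hε1
  have hBbig : (2 * 10 ^ 5) ^ 2 ≤ B := by linarith [log_two_gt_d9]
  have hlogB : log B ≤ B / 10 ^ 5 := log_le_div_of_sq_le (by norm_num) hBbig
  have hsplit : log (2 * A * r) = log 2 + log B - 2 * log ε + log r := by
    rw [log_mul (by positivity) (by linarith), log_mul two_ne_zero hA0.ne',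
      log_mul (by positivity) hA0.ne', log_pow]
    push_cast; ring
  have hlogdiv : log (r / ε) = log r - log ε := log_div (by linarith) hε.ne'
  have hlogr : 0 ≤ log r := log_nonneg (by linarith)
  have hlogε : log ε ≤ 0 := log_nonpos hε.le hε1
  linarith

theorem stmt_16 :
    ∃ C : ℝ, 0 < C ∧
      ∀ (r ε : ℝ) (f : ℕ → ℝ) (k : ℕ),
        2 ≤ r → 0 < ε → ε ≤ 1 →
        (∀ i, 0 ≤ f i) →
        (∀ i < k, 1 ≤ f i * r) →
        (∀ i < k, |2 * f (i + 1) - f i| ≤ 10 * Real.sqrt (f i * Real.log (f i * r))) →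
        C * ε⁻¹ ^ 2 * Real.log (r / ε) ≤ f 0 / 2 ^ k →
        |2 ^ k * f k - f 0| ≤ ε * f 0 := by
  refine ⟨10 ^ 12, by norm_num, fun r ε f k hr hε hε1 _ hfr hstep hC => ?_⟩
  set A := f 0 / 2 ^ k
  have hf0 : f 0 = 2 ^ k * A := by unfold A; field_simp
  have hA1 : 1 ≤ A := one_le_of_mul_inv_sq_mul_log_le hr hε hε1 hC
  set c := 2 ^ k * √(1800 * A * log (2 * A * r))
  have hc : 3 * c ≤ ε * f 0 := by
    have := three_mul_sqrt_le (by linarith) hε.le (log_two_mul_mul_le hr hε hε1 hC)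
    rw [hf0]; nlinarith [(by positivity : (0 : ℝ) < 2 ^ k)]
  have hεf : ε * f 0 ≤ f 0 := mul_le_of_le_one_left (by rw [hf0]; positivity) hε1
  have h3c : c * (3 / 4) / (1 - 3 / 4) = 3 * c := by ring
  have hbound := abs_sub_le_of_geometric_steps (g := fun i => 2 ^ i * f i) (k := k) (c := c)
    (q := 3 / 4) (by positivity) (by norm_num) (by norm_num) fun i hi hgi => by
      rw [h3c] at hgi
      have hfi : 2 ^ i * f i ≤ 2 * (2 ^ k * A) := by
        rw [← hf0]; linarith [(abs_le.1 hgi).2]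
      calc |2 ^ (i + 1) * f (i + 1) - 2 ^ i * f i| = 2 ^ i * |2 * f (i + 1) - f i| := by
            rw [show (2 : ℝ) ^ (i + 1) * f (i + 1) - 2 ^ i * f i = 2 ^ i * (2 * f (i + 1) - f i)
              by ring, abs_mul, abs_of_pos (by positivity : (0 : ℝ) < 2 ^ i)]
        _ ≤ 2 ^ i * (10 * √(f i * log (f i * r))) := by gcongr; exact hstep i hi
        _ ≤ c * (3 / 4) ^ (k - i) :=
          two_pow_mul_sqrt_mul_log_le hi.le (by linarith) (by nlinarith) (hfr i hi) hfi
  simp only [pow_zero, one_mul, h3c] at hbound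
  linarith
end

section
/- If cut-error bounds hold for all connected induced subsets, they hold for all subsets: let G be a graph on V, E and F two edge sets on V with F ⊆ E, and α ≥ 0. Suppose for every S ⊆ V such that the subgraph of G induced on S is connected, |2·e_F(S) - e_E(S)| ≤ α·|S|. If additionally G contains all edges of E, then |2·e_F(S) - e_E(S)| ≤ α·|S| for every S ⊆ V. -/
/-- Number of edges of the graph `H` crossing the cut `(S, Sᶜ)`. -/
def cutCount {V : Type*} [Fintype V] [DecidableEq V] (H : SimpleGraph V)
    [DecidableRel H.Adj] (S : Finset V) : ℕ :=
  ((S ×ˢ Sᶜ).filter fun p => H.Adj p.1 p.2).card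

/-!
Every nonempty `S` splits as `T ∪ (S \ T)` where `T` induces a connected subgraph of `G` and no
edge of `G` joins `T` to `S \ T`. Since `E` and `F` are subgraphs of `G`, both cut counts are
additive over this split, so `2 e_F - e_E` is too; the triangle inequality and strong induction on
`S` reduce the bound to the connected pieces.
-/

open Finset

section

variable {V : Type*} [DecidableEq V]

theorem cutCount_union [Fintype V] {H : SimpleGraph V} [DecidableRel H.Adj] {S T : Finset V}
    (hST : Disjoint S T) (hsep : ∀ a ∈ S, ∀ b ∈ T, ¬ H.Adj a b) :
    cutCount H (S ∪ T) = cutCount H S + cutCount H T := by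
  unfold cutCount
  rw [← card_union_of_disjoint]
  · congr 1
    ext ⟨a, b⟩
    simp only [mem_filter, mem_product, mem_union, mem_compl]
    have := hsep a
    have := hsep b
    have := H.adj_comm a b
    have : ∀ x ∈ S, x ∉ T := fun x hx => disjoint_left.1 hST hx
    grind
  · exact disjoint_filter_filter (disjoint_product.2 (.inl hST))

namespace SimpleGraph

variable {G : SimpleGraph V}

theorem connected_induce_insert {T : Finset V} {a b : V} (hT : (G.induce (T : Set V)).Connected)
    (ha : a ∈ T) (hab : G.Adj a b) : (G.induce (insert b T : Finset V)).Connected := by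
  have := connected_induce_union (t := {b}) hT.preconnected .of_subsingleton ha rfl hab
  rwa [coe_insert, Set.insert_eq, Set.union_comm]

/-- A largest connected `T ⊆ S` through a given vertex is closed under `G`-adjacency within `S`. -/
theorem exists_connected_induce_separated (S : Finset V) (hS : S.Nonempty) :
    ∃ T ⊆ S, T.Nonempty ∧ (G.induce (T : Set V)).Connected ∧
      ∀ a ∈ T, ∀ b ∈ S \ T, ¬ G.Adj a b := by
  classical
  obtain ⟨v, hv⟩ := hS
  let C := S.powerset.filter fun T : Finset V => (G.induce (T : Set V)).Connected
  have hvC : {v} ∈ C := by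
    refine mem_filter.2 ⟨mem_powerset.2 (singleton_subset_iff.2 hv), ?_⟩
    rw [coe_singleton]
    exact .of_subsingleton
  obtain ⟨T, hTC, hmax⟩ := C.exists_max_image card ⟨_, hvC⟩
  rw [mem_filter, mem_powerset] at hTC
  obtain ⟨hTS, hT⟩ := hTC
  refine ⟨T, hTS, ?_, hT, fun a ha b hb hab => ?_⟩
  · obtain ⟨⟨x, hx⟩⟩ := hT.nonempty
    exact ⟨x, hx⟩
  · rw [mem_sdiff] at hb
    have := hmax (insert b T) (mem_filter.2
      ⟨mem_powerset.2 (insert_subset hb.1 hTS), connected_induce_insert hT ha hab⟩)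
    rw [card_insert_of_notMem hb.2] at this
    omega

theorem abs_le_of_forall_connected_induce {f : Finset V → ℝ} (α : ℝ)
    (hadd : ∀ S T, Disjoint S T → (∀ a ∈ S, ∀ b ∈ T, ¬ G.Adj a b) → f (S ∪ T) = f S + f T)
    (hconn : ∀ S : Finset V, (G.induce (S : Set V)).Connected → |f S| ≤ α * #S)
    (S : Finset V) : |f S| ≤ α * #S := by
  induction S using Finset.strongInduction with
  | H S ih =>
  rcases S.eq_empty_or_nonempty with rfl | hS
  · have := hadd ∅ ∅ (disjoint_empty_left _) (by simp)
    simp only [union_empty] at this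
    simp [show f ∅ = 0 by linarith]
  obtain ⟨T, hTS, hTne, hT, hsep⟩ := exists_connected_induce_separated (G := G) S hS
  calc |f S| = |f T + f (S \ T)| := by
        rw [← hadd _ _ disjoint_sdiff hsep, union_sdiff_of_subset hTS]
    _ ≤ |f T| + |f (S \ T)| := abs_add_le _ _
    _ ≤ α * #T + α * #(S \ T) := add_le_add (hconn T hT) (ih _ (sdiff_ssubset hTS hTne))
    _ = α * #S := by
        rw [← mul_add, ← Nat.cast_add, add_comm, card_sdiff_add_card_eq_card hTS]

end SimpleGraph

end

theorem stmt_17_general {V : Type*} [Fintype V] [DecidableEq V]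
    (G E F : SimpleGraph V) [DecidableRel E.Adj] [DecidableRel F.Adj]
    (hFE : F ≤ E) (hEG : E ≤ G) (α : ℝ)
    (hconn : ∀ S : Finset V, (G.induce (↑S : Set V)).Connected →
      |2 * (cutCount F S : ℝ) - (cutCount E S : ℝ)| ≤ α * S.card) :
    ∀ S : Finset V, |2 * (cutCount F S : ℝ) - (cutCount E S : ℝ)| ≤ α * S.card := by
  refine G.abs_le_of_forall_connected_induce α (fun S T hST hsep => ?_) hconn
  rw [cutCount_union hST fun a ha b hb h => hsep a ha b hb (hEG h),
    cutCount_union hST fun a ha b hb h => hsep a ha b hb (hEG (hFE h))]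
  push_cast
  ring

theorem stmt_17 {V : Type*} [Fintype V] [DecidableEq V]
    (G E F : SimpleGraph V) [DecidableRel G.Adj] [DecidableRel E.Adj] [DecidableRel F.Adj]
    (hFE : F ≤ E) (hEG : E ≤ G) (α : ℝ) (hα : 0 ≤ α)
    (hconn : ∀ S : Finset V, (G.induce (↑S : Set V)).Connected →
      |2 * (cutCount F S : ℝ) - (cutCount E S : ℝ)| ≤ α * S.card) :
    ∀ S : Finset V, |2 * (cutCount F S : ℝ) - (cutCount E S : ℝ)| ≤ α * S.card :=
  stmt_17_general G E F hFE hEG α hconn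
end
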